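/- Let λ₀, λ₁, λ∞ > 0. Define H_0 = −2( λ₀²·log(2λ₀) + λ₁²·log(2λ₁) + λ∞²·log(2λ∞) ) + 3(λ₀²+λ₁²+λ∞²), H_1 = (1/12)·log(λ₀λ₁λ∞), and H_g = −(B_{2g}/(2g(2g−2)))·( (2λ₀)^{2−2g} + (2λ₁)^{2−2g} + (2λ∞)^{2−2g} ) for g ≥ 2. Then for each j ∈ {0,1,∞} and every integer n ≥ 1, Σ_{k=1}^{n} (2/(2k)!) · ∂_{λ_j}^{2k} H_{n−k} = −4·log(2λ_j) if n = 1, and = (1/(n−1))·(2λ_j)^{2−2n} if n ≥ 2. (That is, the formal series H = Σ_{g≥0} ℏ^{2g−2} H_g satisfies X_j H = −2log(2λ_j) − log(2λ_j+ℏ) − log(2λ_j−ℏ) for each j, order by order in ℏ, using log(2λ_j+ℏ)+log(2λ_j−ℏ) = 2log(2λ_j) − Σ_{m≥1}(1/m)(ℏ/(2λ_j))^{2m}.) -/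

import Mathlib

/-!
Each `H_g(λ₀, λ₁, λ∞)` is `F_g λ₀ + F_g λ₁ + F_g λ∞` for a one-variable function `F_g`
(`freeEnergy g`), so in the variable `λ_j` the other two summands are constants and drop out.
For `n = 1` the sum is `F₀'' = -4 log (2λ)`. For `n ≥ 2` every term `∂^{2k} F_{n-k}` is an explicit
multiple of `λ^{2-2n}` (`F₀''` and `F₁` are logarithms, the other `F_g` are powers), and the claim
reduces to the Bernoulli identity `∑_{g<n} C(2n,2g) (2g-1) B_{2g} 2^{2n-2g} = -2n(2n-1)`.
That identity is the value at `x = 2`, `N = 2n` of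
`∑_{i ≤ N} C(N,i) (i-1) B_i x^{N-i} = (N-1) B_N(x) - N x B_{N-1}(x)` (a consequence of
`B_N' = N B_{N-1}`), since `B_N(2) = B_N + N` and `B_{N-1} = 0`.
-/

open Finset Real
open scoped Nat

theorem sum_sub_one_mul_bernoulli_mul_choose (N : ℕ) (x : ℚ) :
    ∑ i ∈ range (N + 1), ((i : ℚ) - 1) * bernoulli i * N.choose i * x ^ (N - i)
      = (N - 1) * (Polynomial.bernoulli N).eval x
        - N * x * (Polynomial.bernoulli (N - 1)).eval x := by
  have hB : (Polynomial.bernoulli N).eval x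
      = ∑ i ∈ range (N + 1), bernoulli i * N.choose i * x ^ (N - i) := by
    simp [Polynomial.bernoulli, Polynomial.eval_finsetSum]
  have hB' : N * x * (Polynomial.bernoulli (N - 1)).eval x
      = ∑ i ∈ range (N + 1),
          ((N - i : ℕ) : ℚ) * bernoulli i * N.choose i * x ^ (N - i) := by
    have h : (Polynomial.derivative (Polynomial.bernoulli N)).eval x
        = N * (Polynomial.bernoulli (N - 1)).eval x := by
      simp [Polynomial.derivative_bernoulli]
    rw [mul_right_comm, ← h, mul_comm]
    simp only [Polynomial.bernoulli, Polynomial.derivative_sum, Polynomial.derivative_monomial,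
      Polynomial.eval_finsetSum, Polynomial.eval_monomial, mul_sum]
    refine sum_congr rfl fun i _ => ?_
    rcases Nat.eq_zero_or_pos (N - i) with h0 | hpos
    · simp [h0]
    · rw [← Nat.succ_pred_eq_of_pos hpos]
      simp only [Nat.succ_sub_one, pow_succ]
      push_cast
      ring
  rw [hB, hB', mul_sum, ← sum_sub_distrib]
  refine sum_congr rfl fun i hi => ?_
  rw [Nat.cast_sub (Nat.lt_succ_iff.mp (mem_range.mp hi))]
  ring

theorem sum_range_mul_bernoulli_two_mul (n : ℕ) (hn : 2 ≤ n) :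
    ∑ g ∈ range n, (2 * (g : ℚ) - 1) * bernoulli (2 * g) * (2 * n).choose (2 * g)
        * 2 ^ (2 * n - 2 * g) = -(2 * n * (2 * n - 1)) := by
  set f : ℕ → ℚ := fun i => ((i : ℚ) - 1) * bernoulli i * (2 * n).choose i * 2 ^ (2 * n - i)
  -- odd `i ≥ 3` have `B_i = 0`, and the weight `i - 1` kills `i = 1`
  have hf_odd : ∀ i ∈ range (2 * n + 1), i ∉ (range (n + 1)).image (2 * ·) → f i = 0 := by
    intro i hi hi'
    have hi_odd : Odd i := Nat.not_even_iff_odd.mp fun ⟨g, hg⟩ =>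
      hi' (mem_image.mpr ⟨g, by simp only [mem_range] at hi ⊢; omega, by omega⟩)
    rcases (show i = 1 ∨ 1 < i by have := hi_odd.pos; omega) with rfl | h1
    · simp [f]
    · simp [f, bernoulli_eq_zero_of_odd hi_odd h1]
  have heval : ∀ N, 2 ≤ N → (Polynomial.bernoulli N).eval 2 = bernoulli N + N := by
    intro N hN
    rw [bernoulli_eq_bernoulli'_of_ne_one (by omega)]
    simpa [one_add_one_eq_two] using Polynomial.bernoulli_eval_one_add N 1
  have hfull := sum_sub_one_mul_bernoulli_mul_choose (2 * n) 2
  rw [← sum_subset (image_subset_iff.mpr fun g hg => by simp only [mem_range] at hg ⊢; omega)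
      hf_odd, sum_image fun a _ b _ h => by simpa using h, sum_range_succ,
    heval _ (by omega), heval _ (by omega),
    bernoulli_eq_zero_of_odd (n := 2 * n - 1) ⟨n - 1, by omega⟩ (by omega)] at hfull
  simp only [f, Nat.choose_self, Nat.sub_self, pow_zero] at hfull
  push_cast [Nat.cast_sub (by omega : 1 ≤ 2 * n)] at hfull ⊢
  linear_combination hfull

theorem sum_range_mul_bernoulli_div_factorial (n : ℕ) (hn : 2 ≤ n) :
    ∑ g ∈ range n, (2 * (g : ℝ) - 1) * bernoulli (2 * g) * (2 : ℝ) ^ (2 - 2 * (g : ℤ))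
        / ((2 * g)! * (2 * (n - g))!) = -((2 : ℝ) ^ (2 - 2 * (n : ℤ)) / (2 * n - 2)!) := by
  have h := congrArg (Rat.cast : ℚ → ℝ) (sum_range_mul_bernoulli_two_mul n hn)
  have hterm : ∀ g ∈ range n, (((2 * (g : ℚ) - 1) * bernoulli (2 * g) * (2 * n).choose (2 * g)
        * 2 ^ (2 * n - 2 * g) : ℚ) : ℝ)
      = ((2 * n)! * 2 ^ (2 * n - 2)) * ((2 * (g : ℝ) - 1) * bernoulli (2 * g)
        * (2 : ℝ) ^ (2 - 2 * (g : ℤ)) / ((2 * g)! * (2 * (n - g))!)) := by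
    intro g hg
    have hgn : g < n := mem_range.mp hg
    have h2 : (2 : ℝ) ^ (2 * n - 2 * g) = 2 ^ (2 * n - 2) * (2 : ℝ) ^ (2 - 2 * (g : ℤ)) := by
      rw [← zpow_natCast, ← zpow_natCast, ← zpow_add₀ two_ne_zero]
      congr 1
      push_cast [Nat.cast_sub (by omega : 2 * g ≤ 2 * n), Nat.cast_sub (by omega : 2 ≤ 2 * n)]
      ring
    push_cast
    rw [Nat.cast_choose ℝ (by omega : 2 * g ≤ 2 * n), h2,
      show 2 * n - 2 * g = 2 * (n - g) by omega]
    field_simp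
  rw [Rat.cast_sum, sum_congr rfl hterm, ← mul_sum] at h
  have hfac : ((2 * n)! : ℝ) = 2 * n * (2 * n - 1) * (2 * n - 2)! := by
    rw [show 2 * n = 2 * n - 2 + 1 + 1 by omega, Nat.factorial_succ, Nat.factorial_succ]
    push_cast [Nat.cast_sub (by omega : 2 ≤ 2 * n)]
    ring
  have hpow : (2 : ℝ) ^ (2 - 2 * (n : ℤ)) * 2 ^ (2 * n - 2) = 1 := by
    rw [← zpow_natCast, ← zpow_add₀ two_ne_zero]
    push_cast [Nat.cast_sub (by omega : 2 ≤ 2 * n)]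
    simp
  have hn' : (2 * n : ℝ) * (2 * n - 1) ≠ 0 := by
    have : (2 : ℝ) ≤ n := by exact_mod_cast hn
    apply mul_ne_zero <;> linarith
  set S := ∑ g ∈ range n, (2 * (g : ℝ) - 1) * bernoulli (2 * g) * (2 : ℝ) ^ (2 - 2 * (g : ℤ))
        / ((2 * g)! * (2 * (n - g))!)
  rw [hfac] at h
  push_cast at h
  have hS : ((2 * n - 2)! : ℝ) * 2 ^ (2 * n - 2) * S = -1 :=
    mul_left_cancel₀ hn' (by linear_combination h)
  field_simp
  linear_combination (2 : ℝ) ^ (2 - 2 * (n : ℤ)) * hS - S * ((2 * n - 2)! : ℝ) * hpow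

noncomputable def freeEnergy : ℕ → ℝ → ℝ
  | 0, y => -2 * y ^ 2 * log (2 * y) + 3 * y ^ 2
  | 1, y => log y / 12
  | g@(_ + 2), y => -((bernoulli (2 * g) : ℝ) / (2 * (g : ℝ) * (2 * (g : ℝ) - 2)))
      * (2 * y) ^ (2 - 2 * (g : ℤ))

theorem prod_range_neg_sub_eq_ascFactorial {R : Type*} [CommRing R] (p m : ℕ) :
    ∏ i ∈ range m, (-((p : R) + 1) - i) = (-1) ^ m * ((p + 1).ascFactorial m : R) := by
  have h := prod_neg (s := range m) fun i => ((p + 1 + i : ℕ) : R)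
  rw [card_range] at h
  rw [Nat.ascFactorial_eq_prod_range, Nat.cast_prod, ← h]
  exact prod_congr rfl fun i _ => by push_cast; ring

theorem Real.iteratedDeriv_succ_log (m : ℕ) (x : ℝ) :
    iteratedDeriv (m + 1) log x = (-1) ^ m * m ! * x ^ (-1 - (m : ℤ)) := by
  rw [iteratedDeriv_succ', deriv_log', iteratedDeriv_eq_iterate,
    show (Inv.inv : ℝ → ℝ) = fun y => y ^ (-1 : ℤ) from funext fun y => (zpow_neg_one y).symm,
    iter_deriv_zpow]
  have h := prod_range_neg_sub_eq_ascFactorial (R := ℝ) 0 m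
  rw [Nat.cast_zero, zero_add, Nat.one_ascFactorial] at h
  push_cast
  rw [h]

theorem hasDerivAt_log_two_mul {y : ℝ} (hy : 0 < y) :
    HasDerivAt (fun t => log (2 * t)) y⁻¹ y := by
  convert ((hasDerivAt_id' y).const_mul 2).log (by positivity) using 1
  field_simp

theorem deriv_freeEnergy_zero :
    Set.EqOn (deriv (freeEnergy 0)) (fun y => -4 * y * log (2 * y) + 4 * y) (Set.Ioi 0) := by
  intro y (hy : 0 < y)
  have h : HasDerivAt (fun t => -2 * t ^ 2 * log (2 * t) + 3 * t ^ 2)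
      (-4 * y * log (2 * y) + 4 * y) y := by
    refine ((((hasDerivAt_pow 2 y).const_mul (-2)).fun_mul (hasDerivAt_log_two_mul hy)).fun_add
      ((hasDerivAt_pow 2 y).const_mul 3)).congr_deriv ?_
    field_simp
    ring
  exact h.deriv

theorem iteratedDeriv_two_freeEnergy_zero :
    Set.EqOn (iteratedDeriv 2 (freeEnergy 0)) (fun y => -4 * log (2 * y)) (Set.Ioi 0) := by
  intro y (hy : 0 < y)
  have h : HasDerivAt (fun t => -4 * t * log (2 * t) + 4 * t) (-4 * log (2 * y)) y := by
    refine ((((hasDerivAt_id' y).const_mul (-4)).fun_mul (hasDerivAt_log_two_mul hy)).fun_add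
      ((hasDerivAt_id' y).const_mul 4)).congr_deriv ?_
    field_simp
    ring
  rw [iteratedDeriv_succ, iteratedDeriv_one, deriv_freeEnergy_zero.deriv isOpen_Ioi hy]
  exact h.deriv

theorem iteratedDeriv_add_three_freeEnergy_zero (m : ℕ) {x : ℝ} (hx : 0 < x) :
    iteratedDeriv (m + 3) (freeEnergy 0) x = -4 * iteratedDeriv (m + 1) log x := by
  have h : Set.EqOn (iteratedDeriv 2 (freeEnergy 0)) (fun y => -4 * log 2 + -4 * log y)
      (Set.Ioi 0) := by
    intro y (hy : 0 < y)
    rw [iteratedDeriv_two_freeEnergy_zero hy]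
    dsimp only
    rw [log_mul two_ne_zero hy.ne']
    ring
  rw [iteratedDeriv_eq_iterate, show m + 3 = (m + 1) + 2 from rfl, Function.iterate_add_apply,
    ← iteratedDeriv_eq_iterate, ← iteratedDeriv_eq_iterate,
    h.iteratedDeriv_of_isOpen isOpen_Ioi (m + 1) hx, iteratedDeriv_const_add (by omega),
    iteratedDeriv_const_mul_field]

theorem iteratedDeriv_freeEnergy_add_two (j k : ℕ) (x : ℝ) :
    iteratedDeriv (2 * k) (freeEnergy (j + 2)) x
      = -((2 * (j + 2 + k) - 3)! * (2 * ((j + 2 : ℕ) : ℝ) - 1) * bernoulli (2 * (j + 2))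
          * (2 : ℝ) ^ (2 - 2 * ((j + 2 : ℕ) : ℤ)) / (2 * (j + 2))!)
        * x ^ (2 - 2 * ((j + 2 + k : ℕ) : ℤ)) := by
  have hF : freeEnergy (j + 2) = fun y => -((bernoulli (2 * (j + 2)) : ℝ)
      / (2 * ((j + 2 : ℕ) : ℝ) * (2 * ((j + 2 : ℕ) : ℝ) - 2)))
      * 2 ^ (2 - 2 * ((j + 2 : ℕ) : ℤ)) * y ^ (2 - 2 * ((j + 2 : ℕ) : ℤ)) :=
    funext fun y => by dsimp only [freeEnergy]; rw [mul_zpow, ← mul_assoc]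
  have hprod := prod_range_neg_sub_eq_ascFactorial (R := ℝ) (2 * j + 1) (2 * k)
  have hfac := Nat.factorial_mul_ascFactorial (2 * j + 1) (2 * k)
  have hprod' : ∏ i ∈ range (2 * k), (((2 - 2 * ((j + 2 : ℕ) : ℤ) : ℤ) : ℝ) - i)
      = (2 * j + 1 + 2 * k)! / (2 * j + 1)! := by
    rw [(even_two_mul k).neg_one_pow, one_mul] at hprod
    rw [← hfac, Nat.cast_mul, mul_div_cancel_left₀ _ (by positivity), ← hprod]
    exact prod_congr rfl fun i _ => by push_cast; ring
  have hfac2 :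
      ((2 * (j + 2))! : ℝ) = (2 * j + 4) * (2 * j + 3) * (2 * j + 2) * (2 * j + 1)! := by
    rw [show 2 * (j + 2) = 2 * j + 1 + 1 + 1 + 1 by ring, Nat.factorial_succ,
      Nat.factorial_succ, Nat.factorial_succ]
    push_cast
    ring
  rw [hF, iteratedDeriv_const_mul_field, iteratedDeriv_eq_iterate, iter_deriv_zpow, hprod',
    hfac2, show 2 * (j + 2 + k) - 3 = 2 * j + 1 + 2 * k by omega,
    show 2 - 2 * ((j + 2 : ℕ) : ℤ) - ((2 * k : ℕ) : ℤ) = 2 - 2 * ((j + 2 + k : ℕ) : ℤ) by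
      push_cast; ring]
  push_cast
  have hj : (j : ℝ) + 2 - 1 ≠ 0 := by rw [add_sub_assoc]; positivity
  field_simp
  ring

theorem iteratedDeriv_freeEnergy {g k : ℕ} (hgk : 2 ≤ g + k) {x : ℝ} (hx : 0 < x) :
    iteratedDeriv (2 * k) (freeEnergy g) x
      = -((2 * (g + k) - 3)! * (2 * g - 1) * bernoulli (2 * g) * (2 : ℝ) ^ (2 - 2 * (g : ℤ))
          / (2 * g)!) * x ^ (2 - 2 * ((g + k : ℕ) : ℤ)) := by
  match g, k, hgk with
  | 0, j + 2, _ =>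
    rw [show 2 * (j + 2) = (2 * j + 1) + 3 by ring, iteratedDeriv_add_three_freeEnergy_zero _ hx,
      Real.iteratedDeriv_succ_log, show 2 * (0 + (j + 2)) - 3 = 2 * j + 1 by omega,
      Odd.neg_one_pow ⟨j, rfl⟩]
    push_cast [bernoulli_zero]
    ring_nf
  | 1, j + 1, _ =>
    rw [show 2 * (j + 1) = (2 * j + 1) + 1 by ring, show freeEnergy 1 = (log · / 12) from rfl,
      iteratedDeriv_div_const, Real.iteratedDeriv_succ_log,
      show 2 * (1 + (j + 1)) - 3 = 2 * j + 1 by omega, Odd.neg_one_pow ⟨j, rfl⟩]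
    push_cast [bernoulli_two]
    ring_nf
  | j + 2, k, _ => exact iteratedDeriv_freeEnergy_add_two j k x

theorem sum_iteratedDeriv_freeEnergy_of_two_le {n : ℕ} (hn : 2 ≤ n) {a : ℝ} (ha : 0 < a) :
    ∑ k ∈ Icc 1 n, 2 / ((2 * k)! : ℝ) * iteratedDeriv (2 * k) (freeEnergy (n - k)) a
      = 1 / ((n : ℝ) - 1) * (2 * a) ^ (2 - 2 * (n : ℤ)) := by
  set T : ℕ → ℝ := fun g => (2 * (g : ℝ) - 1) * bernoulli (2 * g)
    * (2 : ℝ) ^ (2 - 2 * (g : ℤ)) / ((2 * g)! * (2 * (n - g))!)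
  have hterm : ∀ k ∈ Icc 1 n,
      2 / ((2 * k)! : ℝ) * iteratedDeriv (2 * k) (freeEnergy (n - k)) a
        = -(2 * (2 * n - 3)! * a ^ (2 - 2 * (n : ℤ))) * T (n - k) := by
    intro k hk
    have hkn := (mem_Icc.mp hk).2
    rw [iteratedDeriv_freeEnergy (by omega) ha, Nat.sub_add_cancel hkn]
    simp only [T, show n - (n - k) = k by omega]
    field_simp
  have hreflect : ∑ k ∈ Icc 1 n, T (n - k) = ∑ g ∈ range n, T g := by
    rw [← Ico_add_one_right_eq_Icc, sum_Ico_reflect T 1 le_rfl, Nat.sub_self,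
      Nat.add_sub_cancel, Nat.Ico_zero_eq_range]
  have hfac : ((2 * n - 2)! : ℝ) = (2 * n - 2) * (2 * n - 3)! := by
    rw [show 2 * n - 2 = 2 * n - 3 + 1 by omega, Nat.factorial_succ]
    push_cast [Nat.cast_sub (by omega : 3 ≤ 2 * n)]
    ring
  have hn1 : (n : ℝ) - 1 ≠ 0 := by
    have : (2 : ℝ) ≤ n := by exact_mod_cast hn
    linarith
  rw [sum_congr rfl hterm, ← mul_sum, hreflect, sum_range_mul_bernoulli_div_factorial n hn,
    hfac, mul_zpow]
  field_simp

theorem sum_iteratedDeriv_freeEnergy {n : ℕ} (hn : 1 ≤ n) {a : ℝ} (ha : 0 < a) :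
    ∑ k ∈ Icc 1 n, 2 / ((2 * k)! : ℝ) * iteratedDeriv (2 * k) (freeEnergy (n - k)) a
      = if n = 1 then -4 * log (2 * a) else 1 / ((n : ℝ) - 1) * (2 * a) ^ (2 - 2 * (n : ℤ)) := by
  rcases hn.eq_or_lt with rfl | hn
  · rw [if_pos rfl, Icc_self, sum_singleton, Nat.sub_self, iteratedDeriv_two_freeEnergy_zero ha]
    norm_num
  · rw [if_neg hn.ne', sum_iteratedDeriv_freeEnergy_of_two_le hn ha]

theorem sum_iteratedDeriv_of_eq_freeEnergy_add_const (K : ℕ → ℝ → ℝ)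
    (hK : ∀ g, ∃ C, ∀ y, 0 < y → K g y = freeEnergy g y + C) {n : ℕ} (hn : 1 ≤ n) {a : ℝ}
    (ha : 0 < a) :
    ∑ k ∈ Icc 1 n, 2 / ((2 * k)! : ℝ) * iteratedDeriv (2 * k) (K (n - k)) a
      = if n = 1 then -4 * log (2 * a) else 1 / ((n : ℝ) - 1) * (2 * a) ^ (2 - 2 * (n : ℤ)) := by
  rw [← sum_iteratedDeriv_freeEnergy hn ha]
  refine sum_congr rfl fun k hk => ?_
  obtain ⟨C, hC⟩ := hK (n - k)
  have hEq : Set.EqOn (K (n - k)) (fun y => C + freeEnergy (n - k) y) (Set.Ioi 0) :=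
    fun y (hy : 0 < y) => by rw [hC y hy, add_comm]
  rw [hEq.iteratedDeriv_of_isOpen isOpen_Ioi _ ha,
    iteratedDeriv_const_add (by have := (mem_Icc.mp hk).1; omega)]

/-- The formal series `H = Σ_{g≥0} ℏ^{2g−2} H_g(λ₀,λ₁,λ∞)` with
`H_0 = −2(λ₀²log(2λ₀)+λ₁²log(2λ₁)+λ∞²log(2λ∞)) + 3(λ₀²+λ₁²+λ∞²)`,
`H_1 = (1/12)log(λ₀λ₁λ∞)`,
`H_g = −(B_{2g}/(2g(2g−2)))((2λ₀)^{2−2g}+(2λ₁)^{2−2g}+(2λ∞)^{2−2g})` (g ≥ 2)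
satisfies `X_j H = −2log(2λ_j) − log(2λ_j+ℏ) − log(2λ_j−ℏ)` for each `j`,
order by order in `ℏ`. -/
theorem stmt17 (H : ℕ → ℝ → ℝ → ℝ → ℝ)
    (hH0 : ∀ a b c : ℝ, 0 < a → 0 < b → 0 < c →
      H 0 a b c = -2 * (a ^ 2 * Real.log (2 * a) + b ^ 2 * Real.log (2 * b)
          + c ^ 2 * Real.log (2 * c)) + 3 * (a ^ 2 + b ^ 2 + c ^ 2))
    (hH1 : ∀ a b c : ℝ, 0 < a → 0 < b → 0 < c →
      H 1 a b c = 1 / 12 * Real.log (a * b * c))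
    (hHg : ∀ g : ℕ, 2 ≤ g → ∀ a b c : ℝ, 0 < a → 0 < b → 0 < c →
      H g a b c = -((bernoulli (2 * g) : ℝ) / (2 * (g : ℝ) * (2 * (g : ℝ) - 2)))
        * ((2 * a) ^ (2 - 2 * (g : ℤ)) + (2 * b) ^ (2 - 2 * (g : ℤ))
            + (2 * c) ^ (2 - 2 * (g : ℤ))))
    (n : ℕ) (hn : 1 ≤ n) (a b c : ℝ) (ha : 0 < a) (hb : 0 < b) (hc : 0 < c) :
    (∑ k ∈ Finset.Icc 1 n, 2 / (Nat.factorial (2 * k) : ℝ)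
          * iteratedDeriv (2 * k) (fun y => H (n - k) y b c) a
        = if n = 1 then -4 * Real.log (2 * a)
          else 1 / ((n : ℝ) - 1) * (2 * a) ^ (2 - 2 * (n : ℤ)))
    ∧ (∑ k ∈ Finset.Icc 1 n, 2 / (Nat.factorial (2 * k) : ℝ)
          * iteratedDeriv (2 * k) (fun y => H (n - k) a y c) b
        = if n = 1 then -4 * Real.log (2 * b)
          else 1 / ((n : ℝ) - 1) * (2 * b) ^ (2 - 2 * (n : ℤ)))
    ∧ (∑ k ∈ Finset.Icc 1 n, 2 / (Nat.factorial (2 * k) : ℝ)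
          * iteratedDeriv (2 * k) (fun y => H (n - k) a b y) c
        = if n = 1 then -4 * Real.log (2 * c)
          else 1 / ((n : ℝ) - 1) * (2 * c) ^ (2 - 2 * (n : ℤ))) := by
  have hH : ∀ g a b c, 0 < a → 0 < b → 0 < c →
      H g a b c = freeEnergy g a + freeEnergy g b + freeEnergy g c := by
    intro g a b c ha hb hc
    match g with
    | 0 => rw [hH0 a b c ha hb hc]; simp only [freeEnergy]; ring
    | 1 =>
      rw [hH1 a b c ha hb hc, log_mul (by positivity) hc.ne', log_mul ha.ne' hb.ne']
      simp only [freeEnergy]; ring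
    | g + 2 => rw [hHg (g + 2) (by omega) a b c ha hb hc]; simp only [freeEnergy]; ring
  refine ⟨sum_iteratedDeriv_of_eq_freeEnergy_add_const (fun g y => H g y b c) (fun g => ?_) hn ha,
    sum_iteratedDeriv_of_eq_freeEnergy_add_const (fun g y => H g a y c) (fun g => ?_) hn hb,
    sum_iteratedDeriv_of_eq_freeEnergy_add_const (fun g y => H g a b y) (fun g => ?_) hn hc⟩
  · exact ⟨freeEnergy g b + freeEnergy g c, fun y hy => by rw [hH g y b c hy hb hc]; ring⟩
  · exact ⟨freeEnergy g a + freeEnergy g c, fun y hy => by rw [hH g a y c ha hy hc]; ring⟩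
  · exact ⟨freeEnergy g a + freeEnergy g b, fun y hy => by rw [hH g a b y ha hb hy]; ring⟩
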